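/- Let Λ be a finite-dimensional algebra, M a Λ-module, and suppose X is an M-semistable object of K^{[-1,0]}(proj Λ). Then for every inflation Y ↣ X (a morphism fitting into a conflation Y ↣ X ↠ Z in K^{[-1,0]}(proj Λ)), one has ⟨[Y], [M]⟩ ≥ 0, i.e. dim Hom(Y⁰, M) ≥ dim Hom(Y⁻¹, M). -/

import Mathlib

/-!
Since `Z⁻¹` is projective, the degree `-1` part `Y⁻¹ → X⁻¹` of the inflation has a retraction
`r`. Given `ψ : Y⁻¹ → M`, semistability of `X` extends `ψ ∘ r` along `X⁻¹ → X⁰` to some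
`φ : X⁰ → M`, and then `φ ∘ f⁰` extends `ψ` along `Y⁻¹ → Y⁰`. So `Hom(Y⁰, M) → Hom(Y⁻¹, M)` is
surjective, which bounds the dimensions.
-/

theorem Function.Exact.exists_retraction_of_projective {R A B C : Type*} [Ring R]
    [AddCommGroup A] [Module R A] [AddCommGroup B] [Module R B]
    [AddCommGroup C] [Module R C] [Module.Projective R C]
    {f : A →ₗ[R] B} {g : B →ₗ[R] C} (hexact : Function.Exact f g)
    (hf : Function.Injective f) (hg : Function.Surjective g) :
    ∃ r : B →ₗ[R] A, r ∘ₗ f = LinearMap.id :=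
  ((hexact.split_tfae hf hg).out 0 1).mp
    (Module.projective_lifting_property g LinearMap.id hg)

theorem Module.Finite.linearMap_of_isNoetherianRing {R S P N : Type*} [Ring R] [Ring S]
    [IsNoetherianRing S] [AddCommGroup P] [Module R P] [Module.Finite R P]
    [AddCommGroup N] [Module R N] [Module S N] [SMulCommClass R S N] [Module.Finite S N] :
    Module.Finite S (P →ₗ[R] N) := by
  obtain ⟨n, π, hπ⟩ := Module.Finite.exists_fin' R P
  exact Module.Finite.of_injective (LinearMap.lcomp S N π)
    (LinearMap.lcomp_injective_of_surjective π hπ)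

theorem LinearMap.surjective_precomp_of_retraction {R Ym Y0 Xm X0 M : Type*} [Ring R]
    [AddCommGroup Ym] [Module R Ym] [AddCommGroup Y0] [Module R Y0]
    [AddCommGroup Xm] [Module R Xm] [AddCommGroup X0] [Module R X0]
    [AddCommGroup M] [Module R M]
    {dy : Ym →ₗ[R] Y0} {dx : Xm →ₗ[R] X0} {fm : Ym →ₗ[R] Xm} {f0 : Y0 →ₗ[R] X0}
    (hf : f0 ∘ₗ dy = dx ∘ₗ fm) {r : Xm →ₗ[R] Ym} (hr : r ∘ₗ fm = LinearMap.id)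
    (hX : Function.Surjective fun φ : X0 →ₗ[R] M => φ ∘ₗ dx) :
    Function.Surjective fun φ : Y0 →ₗ[R] M => φ ∘ₗ dy := by
  intro ψ
  obtain ⟨φ, hφ : φ ∘ₗ dx = ψ ∘ₗ r⟩ := hX (ψ ∘ₗ r)
  refine ⟨φ ∘ₗ f0, ?_⟩
  calc φ ∘ₗ f0 ∘ₗ dy = (φ ∘ₗ dx) ∘ₗ fm := by rw [hf]; rfl
    _ = ψ := by rw [hφ, LinearMap.comp_assoc, hr, LinearMap.comp_id]

theorem stmt5 {k Λ : Type*} [Field k] [Ring Λ] [Algebra k Λ] [FiniteDimensional k Λ]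
    {M : Type*} [AddCommGroup M] [Module Λ M] [Module k M] [IsScalarTower k Λ M]
    [SMulCommClass Λ k M] [Module.Finite Λ M]
    {Ym Y0 Xm X0 Zm : Type*}
    [AddCommGroup Ym] [Module Λ Ym]
    [AddCommGroup Y0] [Module Λ Y0] [Module.Finite Λ Y0]
    [AddCommGroup Xm] [Module Λ Xm]
    [AddCommGroup X0] [Module Λ X0]
    [AddCommGroup Zm] [Module Λ Zm] [Module.Projective Λ Zm]
    (dy : Ym →ₗ[Λ] Y0) (dx : Xm →ₗ[Λ] X0)
    -- the conflation `Y ↣ X ↠ Z`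
    (fm : Ym →ₗ[Λ] Xm) (f0 : Y0 →ₗ[Λ] X0) (gm : Xm →ₗ[Λ] Zm)
    (hf : f0.comp dy = dx.comp fm)
    (hmono_m : Function.Injective fm) (hexact_m : Function.Exact fm gm)
    (hepi_m : Function.Surjective gm)
    -- `X` is `M`-semistable
    (hX : Function.Bijective fun φ : X0 →ₗ[Λ] M => φ.comp dx) :
    Module.finrank k (Ym →ₗ[Λ] M) ≤ Module.finrank k (Y0 →ₗ[Λ] M) := by
  obtain ⟨r, hr⟩ := hexact_m.exists_retraction_of_projective hmono_m hepi_m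
  have hsurj : Function.Surjective (LinearMap.lcomp k M dy) :=
    LinearMap.surjective_precomp_of_retraction hf hr hX.surjective
  have : Module.Finite k M := Module.Finite.trans Λ M
  have : Module.Finite k (Y0 →ₗ[Λ] M) := Module.Finite.linearMap_of_isNoetherianRing
  exact LinearMap.finrank_le_finrank_of_surjective hsurj
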